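/- Consider a finite MDP (S, A, P) with bounded reward function R : S × A → ℝ, and suppose there exists a state s* ∈ S that is recurrent under every stationary policy. Then there exist a real number v and a function h : S → ℝ such that for every state s ∈ S, h(s) + v = max_{a∈A} ( R(s,a) + Σ_{s'∈S} P(s,a,s') h(s') ), and v equals the optimal expected average reward sup_π lim_{T→∞} (1/T) Σ_{k=0}^{T−1} E[R(s_k, a_k)] (which is independent of the initial state). -/

import Mathlib

open Filter Topology MeasureTheory

section MDPDefs

variable {S A : Type*} [Fintype S] [Fintype A] [DecidableEq S] [DecidableEq A]

/-- `P` is a valid transition kernel for a finite MDP: each `P s a ·` is a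
probability distribution on states. -/
def IsKernel (P : S → A → S → ℝ) : Prop :=
  (∀ s a s', 0 ≤ P s a s') ∧ ∀ s a, (∑ s' : S, P s a s') = 1

/-- A (randomized) stationary policy: each `π s ·` is a probability
distribution on actions. -/
def IsPolicy (π : S → A → ℝ) : Prop :=
  (∀ s a, 0 ≤ π s a) ∧ ∀ s, (∑ a : A, π s a) = 1

/-- The deterministic policy associated with `f : S → A`. -/
def detPol (f : S → A) : S → A → ℝ := fun s a => if a = f s then 1 else 0

/-- The distribution of the state-action pair `(s_k, a_k)` of the Markov chain
induced by policy `π`, transition kernel `P` and initial state `s₀`. -/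
noncomputable def stepDist (P : S → A → S → ℝ) (π : S → A → ℝ) (s₀ : S) :
    ℕ → S × A → ℝ
  | 0 => fun p => (if p.1 = s₀ then (1 : ℝ) else 0) * π p.1 p.2
  | n + 1 => fun p =>
      (∑ q : S × A, stepDist P π s₀ n q * P q.1 q.2 p.1) * π p.1 p.2

/-- `E[R(s_k, a_k)]` for the chain induced by `π` from `s₀`. -/
noncomputable def expRw (P : S → A → S → ℝ) (π : S → A → ℝ) (s₀ : S)
    (R : S → A → ℝ) (k : ℕ) : ℝ :=
  ∑ p : S × A, stepDist P π s₀ k p * R p.1 p.2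

/-- Discounted value `Σ_k γ^k E[R(s_k,a_k)]` of policy `π` from `s₀`. -/
noncomputable def discVal (P : S → A → S → ℝ) (π : S → A → ℝ) (s₀ : S)
    (R : S → A → ℝ) (γ : ℝ) : ℝ :=
  ∑' k : ℕ, γ ^ k * expRw P π s₀ R k

/-- The running average `(1/T) Σ_{k<T} E[R(s_k,a_k)]`. -/
noncomputable def avgSeq (P : S → A → S → ℝ) (π : S → A → ℝ) (s₀ : S)
    (R : S → A → ℝ) (T : ℕ) : ℝ :=
  (∑ k ∈ Finset.range T, expRw P π s₀ R k) / (T : ℝ)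

/-- Optimal expected average reward from initial state `s₀`:
`sup_π lim_T (1/T) Σ_{k<T} E[R(s_k,a_k)]`. -/
noncomputable def optAvg (P : S → A → S → ℝ) (s₀ : S) (R : S → A → ℝ) : ℝ :=
  sSup {v : ℝ | ∃ π : S → A → ℝ, IsPolicy π ∧
    Tendsto (avgSeq P π s₀ R) atTop (nhds v)}

/-- Transition matrix of the Markov chain on `S` induced by policy `π`. -/
noncomputable def polMatrix (P : S → A → S → ℝ) (π : S → A → ℝ) :
    Matrix S S ℝ :=
  Matrix.of fun s s' => ∑ a : A, π s a * P s a s'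

/-- Unichain MDP: for every stationary policy the induced chain is ergodic,
i.e. every state is reachable from every other state. -/
def Unichain (P : S → A → S → ℝ) : Prop :=
  ∀ π : S → A → ℝ, IsPolicy π → ∀ s s' : S,
    ∃ n : ℕ, 1 ≤ n ∧ 0 < ((polMatrix P π) ^ n) s s'

/-- `sstar` is recurrent (reachable from every state) under every stationary
policy. -/
def RecurrentForAll (P : S → A → S → ℝ) (sstar : S) : Prop :=
  ∀ π : S → A → ℝ, IsPolicy π → ∀ s : S,
    ∃ n : ℕ, 1 ≤ n ∧ 0 < ((polMatrix P π) ^ n) s sstar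

/-- `(st, ac)` is a trajectory of the MDP with kernel `P` under the probability
measure `μ`: the finite-dimensional distributions satisfy the Markov
transition law. -/
def IsTraj {Ω : Type*} [MeasurableSpace Ω] (μ : Measure Ω)
    (P : S → A → S → ℝ) (st : ℕ → Ω → S) (ac : ℕ → Ω → A) : Prop :=
  ∀ (k : ℕ) (h : ℕ → S × A) (s' : S),
    μ {ω | (∀ i ≤ k, (st i ω, ac i ω) = h i) ∧ st (k + 1) ω = s'}
      = μ {ω | ∀ i ≤ k, (st i ω, ac i ω) = h i}
          * ENNReal.ofReal (P (h k).1 (h k).2 s')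

/-- Policy `π` is feasible for the peak constraints `r^j(s_k,a_k) ≥ 0`
(holding with probability 1 for all times `k`): every state-action pair that
has positive probability at some time satisfies all constraints. -/
def Feasible {J : ℕ} (P : S → A → S → ℝ) (π : S → A → ℝ) (s₀ : S)
    (rc : Fin J → S → A → ℝ) : Prop :=
  ∀ (k : ℕ) (p : S × A), stepDist P π s₀ k p ≠ 0 → ∀ j, 0 ≤ rc j p.1 p.2

/-- Truncated Lagrangian reward
`R̄(s,a) = max(-C, inf_{λ ≥ 0} (r(s,a) + Σ_j λ_j r^j(s,a)))`, with the infimum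
taken in the extended reals. -/
noncomputable def Rbar {J : ℕ} (r : S → A → ℝ) (rc : Fin J → S → A → ℝ)
    (C : ℝ) (s : S) (a : A) : ℝ :=
  (max ((-C : ℝ) : EReal)
    (⨅ lam : {l : Fin J → ℝ // ∀ j, 0 ≤ l j},
      ((r s a + ∑ j : Fin J, lam.1 j * rc j s a : ℝ) : EReal))).toReal

/-- Number of visits to `(s,a)` among times `1, …, t`. -/
def Nvis {Ω : Type*} (st : ℕ → Ω → S) (ac : ℕ → Ω → A)
    (t : ℕ) (s : S) (a : A) (ω : Ω) : ℕ :=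
  ∑ k ∈ Finset.Icc 1 t, (if (st k ω, ac k ω) = (s, a) then 1 else 0)

end MDPDefs

/-!
Vanishing discount. For `γ < 1` the discounted Bellman operator
`T_γ V s = max_a (R s a + γ ∑ P s a s' V s')` is a `γ`-contraction for the sup norm; its fixed
point `V` satisfies `(1 - γ) ‖V‖ ≤ ‖R‖`. The relative values `W = V - V s*` vanish at `s*`, so for
a greedy policy `f` they solve `W = c + γ Q W`, where `‖c‖ ≤ 2 ‖R‖` and `Q` is the transition
matrix of `f` with the column of `s*` deleted. As `s*` is reached from every state, some power
`Q ^ N` has `ℓ∞`-operator norm `β < 1`, whence `‖W‖ ≤ 2 N ‖R‖ / (1 - β)`, uniformly in `γ` because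
there are finitely many deterministic policies. Along a subsequence `γ → 1`,
`((1 - γ) V s*, W)` converges to a solution `(v, h)` of the average-reward Bellman equation.

Summing `h + v ≥ r_π + P_π h` along the chain of any policy `π` gives
`∑_{k<T} E[R(s_k, a_k)] ≤ T v + 2 ‖h‖`, with the reverse bound for a policy greedy for `h`;
hence `v` is the optimal average reward from every initial state.
-/

open Filter Topology Finset Matrix
open scoped Matrix.Norms.Operator

namespace Matrix

variable {m n : Type*} [Fintype n]

theorem mulVec_one_apply (M : Matrix m n ℝ) (i : m) : (M *ᵥ 1) i = ∑ j, M i j := by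
  simp [mulVec, dotProduct]

theorem linfty_opNorm_eq_norm_mulVec_one [Fintype m] {M : Matrix m n ℝ}
    (hM : ∀ i j, 0 ≤ M i j) : ‖M‖ = ‖M *ᵥ 1‖ := by
  rw [linfty_opNorm_def, Pi.norm_def]
  congr 2 with i
  rw [mulVec_one_apply, Real.nnnorm_of_nonneg (sum_nonneg fun j _ => hM i j)]
  norm_cast
  simp only [Real.nnnorm_of_nonneg (hM i _)]
  exact NNReal.eq (by simp)

theorem norm_le_one_of_mulVec_one_le [Fintype m] {M : Matrix m n ℝ} (hM : ∀ i j, 0 ≤ M i j)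
    (hM1 : M *ᵥ 1 ≤ 1) : ‖M‖ ≤ 1 := by
  rw [linfty_opNorm_eq_norm_mulVec_one hM, pi_norm_le_iff_of_nonneg zero_le_one]
  intro i
  rw [Real.norm_of_nonneg (by rw [mulVec_one_apply]; exact sum_nonneg fun j _ => hM i j)]
  exact hM1 i

theorem mulVec_le_mulVec_of_nonneg_left {M : Matrix m n ℝ} (hM : ∀ i j, 0 ≤ M i j)
    {x y : n → ℝ} (hxy : x ≤ y) : M *ᵥ x ≤ M *ᵥ y :=
  fun i => dotProduct_le_dotProduct_of_nonneg_left hxy (hM i)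

theorem mulVec_le_mulVec_of_nonneg_right {M N : Matrix m n ℝ} (hMN : ∀ i j, M i j ≤ N i j)
    {x : n → ℝ} (hx : 0 ≤ x) : M *ᵥ x ≤ N *ᵥ x :=
  fun i => dotProduct_le_dotProduct_of_nonneg_right (hMN i) hx

variable [DecidableEq n]

theorem updateCol_zero_mulVec (M : Matrix m n ℝ) (j : n) (x : n → ℝ) :
    M.updateCol j 0 *ᵥ x = M *ᵥ Function.update x j 0 := by
  ext i
  simp only [mulVec, dotProduct, updateCol_apply, Function.update_apply]
  exact sum_congr rfl fun k _ => by split_ifs <;> simp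

theorem norm_le_one_of_mem_rowStochastic {M : Matrix n n ℝ} (hM : M ∈ rowStochastic ℝ n) :
    ‖M‖ ≤ 1 :=
  norm_le_one_of_mulVec_one_le (fun _ _ => nonneg_of_mem_rowStochastic hM)
    (one_vecMul_of_mem_rowStochastic hM).le

theorem norm_mul_one_sub_norm_pow_le {M : Matrix n n ℝ} (hM : ‖M‖ ≤ 1) {c w : n → ℝ}
    (hw : w = c + M *ᵥ w) (N : ℕ) : ‖w‖ * (1 - ‖M ^ N‖) ≤ N * ‖c‖ := by
  have hpartial : ∀ k : ℕ, ‖w - M ^ k *ᵥ w‖ ≤ k * ‖c‖ := by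
    intro k
    induction k with
    | zero => simp
    | succ k ih =>
      have hstep : w - M ^ (k + 1) *ᵥ w = c + M *ᵥ (w - M ^ k *ᵥ w) := by
        rw [pow_succ', ← mulVec_mulVec, mulVec_sub]
        nth_rewrite 1 [hw]
        abel
      calc ‖w - M ^ (k + 1) *ᵥ w‖ ≤ ‖c‖ + ‖M‖ * ‖w - M ^ k *ᵥ w‖ := by
            rw [hstep]
            exact (norm_add_le _ _).trans (add_le_add le_rfl (linfty_opNorm_mulVec _ _))
        _ ≤ ‖c‖ + 1 * (k * ‖c‖) := by gcongr
        _ = (k + 1 : ℕ) * ‖c‖ := by push_cast; ring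
  calc ‖w‖ * (1 - ‖M ^ N‖) = ‖w‖ - ‖M ^ N‖ * ‖w‖ := by ring
    _ ≤ ‖w - M ^ N *ᵥ w‖ := by
        linarith [norm_sub_norm_le w (M ^ N *ᵥ w), linfty_opNorm_mulVec (M ^ N) w]
    _ ≤ N * ‖c‖ := hpartial N

section Taboo

/- For a stochastic matrix `P`, `(P.updateCol j 0 ^ k *ᵥ 1) i` is the probability that the chain
started at `i` does not visit `j` at the times `1, …, k`. -/

variable {P : Matrix n n ℝ} (hP : P ∈ rowStochastic ℝ n) (j : n)
include hP

theorem updateCol_zero_mulVec_one : P.updateCol j 0 *ᵥ 1 = 1 - P *ᵥ Pi.single j 1 := by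
  have hupd : Function.update (1 : n → ℝ) j 0 = 1 - Pi.single j 1 := by
    ext i; by_cases h : i = j <;> simp [h]
  rw [updateCol_zero_mulVec, hupd, mulVec_sub, one_vecMul_of_mem_rowStochastic hP]

theorem updateCol_zero_mulVec_one_le : P.updateCol j 0 *ᵥ 1 ≤ 1 := by
  rw [updateCol_zero_mulVec_one hP]
  exact sub_le_self _ fun i => by simpa [mulVec_single_one] using nonneg_of_mem_rowStochastic hP

theorem updateCol_zero_apply_nonneg (i k : n) : 0 ≤ P.updateCol j 0 i k := by
  rw [updateCol_apply]; split_ifs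
  · exact le_rfl
  · exact nonneg_of_mem_rowStochastic hP

theorem updateCol_zero_apply_le (i k : n) : P.updateCol j 0 i k ≤ P i k := by
  rw [updateCol_apply]; split_ifs
  · exact nonneg_of_mem_rowStochastic hP
  · exact le_rfl

theorem updateCol_zero_pow_succ_mulVec_one_le (k : ℕ) :
    P.updateCol j 0 ^ (k + 1) *ᵥ 1 ≤ 1 - P ^ (k + 1) *ᵥ Pi.single j 1 := by
  induction k with
  | zero => rw [zero_add, pow_one, pow_one, updateCol_zero_mulVec_one hP]
  | succ k ih =>
    have hnonneg : 0 ≤ 1 - P ^ (k + 1) *ᵥ Pi.single j 1 := fun i => by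
      simpa [mulVec_single_one] using
        le_one_of_mem_rowStochastic (pow_mem hP (k + 1)) (i := i) (j := j)
    calc P.updateCol j 0 ^ (k + 1 + 1) *ᵥ 1
        = P.updateCol j 0 *ᵥ (P.updateCol j 0 ^ (k + 1) *ᵥ 1) := by
          rw [pow_succ' _ (k + 1), mulVec_mulVec]
      _ ≤ P.updateCol j 0 *ᵥ (1 - P ^ (k + 1) *ᵥ Pi.single j 1) :=
          mulVec_le_mulVec_of_nonneg_left (updateCol_zero_apply_nonneg hP j) ih
      _ ≤ P *ᵥ (1 - P ^ (k + 1) *ᵥ Pi.single j 1) :=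
          mulVec_le_mulVec_of_nonneg_right (updateCol_zero_apply_le hP j) hnonneg
      _ = 1 - P ^ (k + 1 + 1) *ᵥ Pi.single j 1 := by
          rw [mulVec_sub, one_vecMul_of_mem_rowStochastic hP, mulVec_mulVec, ← pow_succ']

theorem antitone_updateCol_zero_pow_mulVec_one : Antitone fun k => P.updateCol j 0 ^ k *ᵥ 1 := by
  refine antitone_nat_of_succ_le fun k => ?_
  rw [pow_succ, ← mulVec_mulVec]
  exact mulVec_le_mulVec_of_nonneg_left (pow_apply_nonneg (updateCol_zero_apply_nonneg hP j) k)
    (updateCol_zero_mulVec_one_le hP j)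

theorem exists_norm_updateCol_zero_pow_lt_one (hreach : ∀ i, ∃ k, 1 ≤ k ∧ 0 < (P ^ k) i j) :
    ∃ N, ‖P.updateCol j 0 ^ N‖ < 1 := by
  choose k hk1 hk using hreach
  refine ⟨∑ i, k i, ?_⟩
  have hQN := pow_apply_nonneg (updateCol_zero_apply_nonneg hP j) (∑ i, k i)
  rw [linfty_opNorm_eq_norm_mulVec_one hQN, pi_norm_lt_iff zero_lt_one]
  intro i
  obtain ⟨l, hl⟩ := Nat.exists_eq_add_of_le' (hk1 i)
  have hle := antitone_updateCol_zero_pow_mulVec_one hP j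
    (single_le_sum (fun i _ => Nat.zero_le (k i)) (mem_univ i)) i
  have hlt := updateCol_zero_pow_succ_mulVec_one_le hP j l i
  rw [← hl] at hlt
  simp only [Pi.sub_apply, Pi.one_apply, mulVec_single_one, col_apply] at hlt
  rw [Real.norm_of_nonneg (by rw [mulVec_one_apply]; exact sum_nonneg fun _ _ => hQN i _)]
  exact hle.trans_lt (hlt.trans_lt (sub_lt_self 1 (hk i)))

end Taboo

variable {M : Matrix n n ℝ}

theorem sum_pow_mulVec_add_pow_mulVec_le (hM : M ∈ rowStochastic ℝ n) {r w : n → ℝ} {v : ℝ}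
    (h : r + M *ᵥ w ≤ w + v • 1) (T : ℕ) :
    ∑ k ∈ range T, M ^ k *ᵥ r + M ^ T *ᵥ w ≤ w + (T * v) • 1 := by
  induction T with
  | zero => simp
  | succ T ih =>
    have hstep : M ^ T *ᵥ (r + M *ᵥ w) ≤ M ^ T *ᵥ w + v • 1 := by
      calc M ^ T *ᵥ (r + M *ᵥ w) ≤ M ^ T *ᵥ (w + v • 1) :=
            mulVec_le_mulVec_of_nonneg_left
              (fun _ _ => nonneg_of_mem_rowStochastic (pow_mem hM T)) h
        _ = M ^ T *ᵥ w + v • 1 := by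
            rw [mulVec_add, mulVec_smul, one_vecMul_of_mem_rowStochastic (pow_mem hM T)]
    calc ∑ k ∈ range (T + 1), M ^ k *ᵥ r + M ^ (T + 1) *ᵥ w
        = ∑ k ∈ range T, M ^ k *ᵥ r + M ^ T *ᵥ (r + M *ᵥ w) := by
          rw [sum_range_succ, mulVec_add, mulVec_mulVec, ← pow_succ, add_assoc]
      _ ≤ ∑ k ∈ range T, M ^ k *ᵥ r + M ^ T *ᵥ w + v • 1 := by
          rw [add_assoc]; exact add_le_add le_rfl hstep
      _ ≤ w + (T * v) • 1 + v • 1 := add_le_add ih le_rfl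
      _ = w + ((T + 1 : ℕ) * v) • 1 := by
          push_cast; rw [add_mul, one_mul, add_smul, add_assoc]

theorem sum_pow_mulVec_apply_le (hM : M ∈ rowStochastic ℝ n) {r w : n → ℝ} {v : ℝ}
    (h : r + M *ᵥ w ≤ w + v • 1) (T : ℕ) (i : n) :
    ∑ k ∈ range T, (M ^ k *ᵥ r) i ≤ T * v + 2 * ‖w‖ := by
  have hsum := sum_pow_mulVec_add_pow_mulVec_le hM h T i
  have hw := norm_le_pi_norm w i
  have hMw := (norm_le_pi_norm (M ^ T *ᵥ w) i).trans ((linfty_opNorm_mulVec _ _).trans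
    (mul_le_of_le_one_left (norm_nonneg w) (norm_le_one_of_mem_rowStochastic (pow_mem hM T))))
  simp only [Pi.add_apply, Finset.sum_apply, Pi.smul_apply, Pi.one_apply, smul_eq_mul,
    mul_one] at hsum
  rw [Real.norm_eq_abs, abs_le] at hw hMw
  linarith [hw.1, hMw.1]

theorem le_sum_pow_mulVec_apply (hM : M ∈ rowStochastic ℝ n) {r w : n → ℝ} {v : ℝ}
    (h : w + v • 1 ≤ r + M *ᵥ w) (T : ℕ) (i : n) :
    T * v - 2 * ‖w‖ ≤ ∑ k ∈ range T, (M ^ k *ᵥ r) i := by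
  have hneg : -r + M *ᵥ -w ≤ -w + (-v) • 1 := by
    rw [mulVec_neg, neg_smul, ← neg_add, ← neg_add]
    exact neg_le_neg h
  have := sum_pow_mulVec_apply_le hM hneg T i
  simp only [mulVec_neg, Pi.neg_apply, sum_neg_distrib, norm_neg] at this
  linarith

end Matrix

theorem abs_ciSup_le_of_forall_abs_le {ι : Type*} [Finite ι] [Nonempty ι] {F : ι → ℝ} {C : ℝ}
    (hF : ∀ i, |F i| ≤ C) : |⨆ i, F i| ≤ C := by
  obtain ⟨i, hi⟩ := exists_eq_ciSup_of_finite (f := F)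
  exact hi ▸ hF i

section MarkovDecisionProcess

variable {S A : Type*} {P : S → A → S → ℝ}

theorem IsKernel.dotProduct_add_smul_one [Fintype S] (hP : IsKernel P) (s : S) (a : A)
    (V : S → ℝ) (c : ℝ) : P s a ⬝ᵥ (V + c • 1) = P s a ⬝ᵥ V + c := by
  rw [dotProduct_add, dotProduct_smul, dotProduct_one, hP.2, smul_eq_mul, mul_one]

theorem IsKernel.abs_dotProduct_le [Fintype S] (hP : IsKernel P) (s : S) (a : A) (V : S → ℝ) :
    |P s a ⬝ᵥ V| ≤ ‖V‖ := by
  calc |P s a ⬝ᵥ V| ≤ ∑ s', P s a s' * ‖V‖ := by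
        refine (abs_sum_le_sum_abs _ _).trans (sum_le_sum fun s' _ => ?_)
        rw [abs_mul, abs_of_nonneg (hP.1 s a s')]
        exact mul_le_mul_of_nonneg_left (norm_le_pi_norm V s') (hP.1 s a s')
    _ = ‖V‖ := by rw [← sum_mul, hP.2, one_mul]

theorem isPolicy_detPol [Fintype A] [DecidableEq A] (f : S → A) : IsPolicy (detPol f) :=
  ⟨fun s a => by unfold detPol; split_ifs <;> norm_num, fun s => by simp [detPol]⟩

theorem detPol_dotProduct [Fintype A] [DecidableEq A] (f : S → A) (s : S) (x : A → ℝ) :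
    detPol f s ⬝ᵥ x = x (f s) := by
  simp [detPol, dotProduct, ite_mul]

theorem polMatrix_mulVec_apply [Fintype S] [Fintype A] (P : S → A → S → ℝ) (π : S → A → ℝ)
    (V : S → ℝ) (s : S) : (polMatrix P π *ᵥ V) s = π s ⬝ᵥ fun a => P s a ⬝ᵥ V := by
  simp only [mulVec, dotProduct, polMatrix, of_apply, sum_mul, mul_sum]
  rw [sum_comm]
  exact sum_congr rfl fun a _ => sum_congr rfl fun s' _ => by ring

theorem IsPolicy.polMatrix_mem_rowStochastic [Fintype S] [Fintype A] [DecidableEq S]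
    {π : S → A → ℝ} (hπ : IsPolicy π) (hP : IsKernel P) : polMatrix P π ∈ rowStochastic ℝ S := by
  refine mem_rowStochastic.2 ⟨fun s s' => sum_nonneg fun a _ =>
    mul_nonneg (hπ.1 s a) (hP.1 s a s'), funext fun s => ?_⟩
  rw [polMatrix_mulVec_apply]
  simp only [dotProduct_one, hP.2]
  exact (dotProduct_one (π s)).trans (hπ.2 s)

end MarkovDecisionProcess

section Discounted

variable {S A : Type*} [Fintype S]

noncomputable def bellmanOp (P : S → A → S → ℝ) (R : S → A → ℝ) (γ : ℝ) (V : S → ℝ) :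
    S → ℝ :=
  fun s => ⨆ a, R s a + γ * P s a ⬝ᵥ V

variable [Fintype A] {P : S → A → S → ℝ} {R : S → A → ℝ} {γ : ℝ}

theorem bellmanOp_mono (hP : IsKernel P) (hγ : 0 ≤ γ) : Monotone (bellmanOp P R γ) :=
  fun _ _ hVW s => ciSup_mono (Set.finite_range _).bddAbove fun a =>
    add_le_add le_rfl (mul_le_mul_of_nonneg_left
      (dotProduct_le_dotProduct_of_nonneg_left hVW (hP.1 s a)) hγ)

theorem exists_bellmanOp_apply_eq [Nonempty A] (P : S → A → S → ℝ) (R : S → A → ℝ) (γ : ℝ)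
    (V : S → ℝ) : ∃ f : S → A, ∀ s, bellmanOp P R γ V s = R s (f s) + γ * P s (f s) ⬝ᵥ V := by
  choose f hf using fun s => exists_eq_ciSup_of_finite (f := fun a => R s a + γ * P s a ⬝ᵥ V)
  exact ⟨f, fun s => (hf s).symm⟩

theorem continuous_bellmanOp [Nonempty A] (P : S → A → S → ℝ) (R : S → A → ℝ) :
    Continuous fun p : ℝ × (S → ℝ) => bellmanOp P R p.1 p.2 := by
  refine continuous_pi fun s => ?_
  simp only [bellmanOp, ← Finset.sup'_univ_eq_ciSup]
  exact Continuous.finset_sup'_apply _ fun a _ => by fun_prop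

variable [Nonempty A]

theorem bellmanOp_add_smul_one (hP : IsKernel P) (V : S → ℝ) (c : ℝ) :
    bellmanOp P R γ (V + c • 1) = bellmanOp P R γ V + (γ * c) • 1 := by
  ext s
  simp only [bellmanOp, hP.dotProduct_add_smul_one, Pi.add_apply, Pi.smul_apply, Pi.one_apply,
    smul_eq_mul, mul_one, mul_add, ← add_assoc]
  exact (ciSup_add (Set.finite_range _).bddAbove _).symm

theorem bellmanOp_sub_smul_one_of_eq_self (hP : IsKernel P) {V : S → ℝ}
    (hV : bellmanOp P R γ V = V) (sstar : S) :
    bellmanOp P R γ (V - V sstar • 1) = V - V sstar • 1 + ((1 - γ) * V sstar) • 1 := by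
  have h := bellmanOp_add_smul_one (R := R) (γ := γ) hP (V - V sstar • 1) (V sstar)
  rw [sub_add_cancel, hV] at h
  rw [eq_sub_of_add_eq h.symm]
  module

-- Blackwell's argument: monotonicity together with `T (V + c) = T V + γ c`.
theorem dist_bellmanOp_le (hP : IsKernel P) (hγ : 0 ≤ γ) (V W : S → ℝ) :
    dist (bellmanOp P R γ V) (bellmanOp P R γ W) ≤ γ * dist V W := by
  have hle : ∀ V W : S → ℝ, ∀ s,
      bellmanOp P R γ V s ≤ bellmanOp P R γ W s + γ * dist V W := by
    intro V W s
    have hVW : V ≤ W + dist V W • 1 := fun s' => by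
      have := (le_abs_self _).trans ((Real.dist_eq (V s') (W s')).symm.le.trans
        (dist_le_pi_dist V W s'))
      simp only [Pi.add_apply, Pi.smul_apply, Pi.one_apply, smul_eq_mul, mul_one]
      linarith
    simpa [bellmanOp_add_smul_one hP] using bellmanOp_mono (R := R) hP hγ hVW s
  refine (dist_pi_le_iff (mul_nonneg hγ dist_nonneg)).2 fun s => ?_
  have h1 := hle V W s
  have h2 := hle W V s
  rw [dist_comm] at h2
  rw [Real.dist_eq, abs_sub_le_iff]
  constructor <;> linarith

theorem contractingWith_bellmanOp (hP : IsKernel P) (hγ0 : 0 ≤ γ) (hγ1 : γ < 1) :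
    ContractingWith ⟨γ, hγ0⟩ (bellmanOp P R γ) :=
  ⟨hγ1, LipschitzWith.of_dist_le_mul (dist_bellmanOp_le hP hγ0)⟩

theorem one_sub_mul_norm_le_of_bellmanOp_eq_self (hP : IsKernel P) (hγ : 0 ≤ γ) {V : S → ℝ}
    (hV : bellmanOp P R γ V = V) : (1 - γ) * ‖V‖ ≤ ‖R‖ := by
  have hbound : ‖V‖ ≤ ‖R‖ + γ * ‖V‖ := by
    refine (pi_norm_le_iff_of_nonneg (by positivity)).2 fun s => ?_
    rw [Real.norm_eq_abs, ← congrFun hV s]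
    refine abs_ciSup_le_of_forall_abs_le fun a => (abs_add_le _ _).trans (add_le_add ?_ ?_)
    · exact (norm_le_pi_norm (R s) a).trans (norm_le_pi_norm R s)
    · rw [abs_mul, abs_of_nonneg hγ]
      exact mul_le_mul_of_nonneg_left (hP.abs_dotProduct_le s a V) hγ
  linarith

end Discounted

section RelativeValue

variable {S A : Type*} [Fintype S] [Fintype A] [DecidableEq S] [Nonempty A]
  {P : S → A → S → ℝ} {R : S → A → ℝ} {γ : ℝ}

theorem norm_sub_smul_one_mul_le [DecidableEq A] (hP : IsKernel P) (hγ0 : 0 ≤ γ) (hγ1 : γ ≤ 1)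
    {V : S → ℝ} (hV : bellmanOp P R γ V = V) {f : S → A}
    (hf : ∀ s, V s = R s (f s) + γ * P s (f s) ⬝ᵥ V) (sstar : S) (N : ℕ) :
    ‖V - V sstar • 1‖ * (1 - ‖(polMatrix P (detPol f)).updateCol sstar 0 ^ N‖)
      ≤ N * (2 * ‖R‖) := by
  have hM := (isPolicy_detPol f).polMatrix_mem_rowStochastic hP
  set W := V - V sstar • 1
  set c : S → ℝ := fun s => R s (f s) - (1 - γ) * V sstar
  have hW : W = c + (γ • (polMatrix P (detPol f)).updateCol sstar 0) *ᵥ W := by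
    have hWs : W sstar = 0 := by simp [W]
    have hPW : ∀ s, P s (f s) ⬝ᵥ W = P s (f s) ⬝ᵥ V - V sstar := fun s => by
      rw [show W = V + (-V sstar) • 1 by simp [W, sub_eq_add_neg],
        hP.dotProduct_add_smul_one, ← sub_eq_add_neg]
    ext s
    rw [smul_mulVec, updateCol_zero_mulVec, Function.update_eq_self_iff.2 hWs.symm, Pi.add_apply,
      Pi.smul_apply, polMatrix_mulVec_apply, detPol_dotProduct, hPW, smul_eq_mul]
    simp only [W, c, Pi.sub_apply, Pi.smul_apply, Pi.one_apply, smul_eq_mul, mul_one]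
    rw [hf s]
    ring
  have hc : ‖c‖ ≤ 2 * ‖R‖ := by
    refine (pi_norm_le_iff_of_nonneg (by positivity)).2 fun s => ?_
    have hRs := (norm_le_pi_norm (R s) (f s)).trans (norm_le_pi_norm R s)
    have hVs := mul_le_mul_of_nonneg_left (norm_le_pi_norm V sstar) (sub_nonneg.2 hγ1)
    have hV' := one_sub_mul_norm_le_of_bellmanOp_eq_self hP hγ0 hV
    rw [Real.norm_eq_abs] at hRs hVs ⊢
    calc |c s| ≤ |R s (f s)| + |(1 - γ) * V sstar| := abs_sub _ _
      _ = |R s (f s)| + (1 - γ) * |V sstar| := by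
          rw [abs_mul, abs_of_nonneg (sub_nonneg.2 hγ1)]
      _ ≤ 2 * ‖R‖ := by linarith
  set Q := (polMatrix P (detPol f)).updateCol sstar 0
  have hQ : ‖γ • Q‖ ≤ 1 := by
    rw [norm_smul, Real.norm_of_nonneg hγ0]
    exact mul_le_one₀ hγ1 (norm_nonneg _) (norm_le_one_of_mulVec_one_le
      (updateCol_zero_apply_nonneg hM sstar) (updateCol_zero_mulVec_one_le hM sstar))
  have hpow : ‖(γ • Q) ^ N‖ ≤ ‖Q ^ N‖ := by
    rw [smul_pow, norm_smul, Real.norm_of_nonneg (pow_nonneg hγ0 N)]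
    exact mul_le_of_le_one_left (norm_nonneg _) (pow_le_one₀ hγ0 hγ1)
  calc ‖W‖ * (1 - ‖Q ^ N‖) ≤ ‖W‖ * (1 - ‖(γ • Q) ^ N‖) := by gcongr
    _ ≤ N * ‖c‖ := norm_mul_one_sub_norm_pow_le hQ hW N
    _ ≤ N * (2 * ‖R‖) := by gcongr

theorem exists_forall_norm_sub_smul_one_le (hP : IsKernel P) {sstar : S}
    (hrec : RecurrentForAll P sstar) (R : S → A → ℝ) :
    ∃ K, ∀ γ, 0 ≤ γ → γ ≤ 1 → ∀ V, bellmanOp P R γ V = V → ‖V - V sstar • 1‖ ≤ K := by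
  classical
  choose N hN using fun f : S → A =>
    exists_norm_updateCol_zero_pow_lt_one ((isPolicy_detPol f).polMatrix_mem_rowStochastic hP)
      sstar (hrec _ (isPolicy_detPol f))
  set β := fun f : S → A => ‖(polMatrix P (detPol f)).updateCol sstar 0 ^ N f‖
  refine ⟨∑ f, N f * (2 * ‖R‖) / (1 - β f), fun γ hγ0 hγ1 V hV => ?_⟩
  obtain ⟨f, hf⟩ := exists_bellmanOp_apply_eq P R γ V
  calc ‖V - V sstar • 1‖ ≤ N f * (2 * ‖R‖) / (1 - β f) :=
        (le_div_iff₀ (sub_pos.2 (hN f))).2 (norm_sub_smul_one_mul_le hP hγ0 hγ1 hV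
          (fun s => (congrFun hV s).symm.trans (hf s)) sstar (N f))
    _ ≤ ∑ f, N f * (2 * ‖R‖) / (1 - β f) :=
        single_le_sum (f := fun f => N f * (2 * ‖R‖) / (1 - β f))
          (fun f _ => div_nonneg (by positivity) (sub_pos.2 (hN f)).le) (mem_univ f)

theorem exists_bellmanOp_one_eq_add_smul_one (hP : IsKernel P) {sstar : S}
    (hrec : RecurrentForAll P sstar) (R : S → A → ℝ) :
    ∃ (v : ℝ) (h : S → ℝ), bellmanOp P R 1 h = h + v • 1 := by
  set γ : ℕ → ℝ := fun n => 1 - 1 / (n + 1)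
  have hγ0 : ∀ n, 0 ≤ γ n := fun n => sub_nonneg.2 (div_le_one_of_le₀ (by simp) (by positivity))
  have hγ1 : ∀ n, γ n < 1 := fun n => sub_lt_self 1 (by positivity)
  have hγlim : Tendsto γ atTop (𝓝 1) := by
    simpa only [sub_zero] using
      (tendsto_const_nhds (x := (1 : ℝ))).sub (tendsto_one_div_add_atTop_nhds_zero_nat (𝕜 := ℝ))
  have hcontr := fun n => contractingWith_bellmanOp (R := R) hP (hγ0 n) (hγ1 n)
  set V := fun n => (hcontr n).fixedPoint
  have hfix : ∀ n, bellmanOp P R (γ n) (V n) = V n := fun n => (hcontr n).fixedPoint_isFixedPt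
  obtain ⟨K, hK⟩ := exists_forall_norm_sub_smul_one_le hP hrec R
  set x : ℕ → ℝ × (S → ℝ) := fun n => ((1 - γ n) * V n sstar, V n - V n sstar • 1)
  have hx : ∀ n, x n ∈ Metric.closedBall 0 (max ‖R‖ K) := fun n => by
    rw [mem_closedBall_zero_iff, Prod.norm_def]
    refine max_le_max ?_ (hK _ (hγ0 n) (hγ1 n).le _ (hfix n))
    rw [norm_mul, Real.norm_of_nonneg (sub_nonneg.2 (hγ1 n).le)]
    exact (mul_le_mul_of_nonneg_left (norm_le_pi_norm _ _) (sub_nonneg.2 (hγ1 n).le)).trans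
      (one_sub_mul_norm_le_of_bellmanOp_eq_self hP (hγ0 n) (hfix n))
  obtain ⟨⟨v, h⟩, -, φ, hφ, hlim⟩ := tendsto_subseq_of_bounded Metric.isBounded_closedBall hx
  refine ⟨v, h, sub_eq_zero.1 ?_⟩
  have hF : Continuous fun p : ℝ × ℝ × (S → ℝ) =>
      bellmanOp P R p.1 p.2.2 - (p.2.2 + p.2.1 • 1) :=
    ((continuous_bellmanOp P R).comp (continuous_fst.prodMk continuous_snd.snd)).sub
      (by fun_prop)
  refine tendsto_nhds_unique ((hF.tendsto (1, v, h)).comp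
    ((hγlim.comp hφ.tendsto_atTop).prodMk_nhds hlim)) (tendsto_const_nhds.congr fun n => ?_)
  exact (sub_eq_zero.2 (bellmanOp_sub_smul_one_of_eq_self hP (hfix (φ n)) sstar)).symm

end RelativeValue

section AverageReward

variable {S A : Type*} [Fintype S] [Fintype A] [DecidableEq S] {P : S → A → S → ℝ}
  {R : S → A → ℝ}

theorem stepDist_eq_pow_apply_mul (P : S → A → S → ℝ) (π : S → A → ℝ) (s₀ : S) (k : ℕ)
    (p : S × A) : stepDist P π s₀ k p = (polMatrix P π ^ k) s₀ p.1 * π p.1 p.2 := by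
  induction k generalizing p with
  | zero => simp [stepDist, one_apply, eq_comm]
  | succ k ih =>
    simp only [stepDist, Fintype.sum_prod_type, ih, pow_succ, mul_apply, polMatrix, of_apply,
      mul_sum]
    exact congrArg (· * _) (sum_congr rfl fun s _ => sum_congr rfl fun a _ => by ring)

theorem expRw_eq_pow_mulVec_apply (P : S → A → S → ℝ) (π : S → A → ℝ) (s₀ : S)
    (R : S → A → ℝ) (k : ℕ) :
    expRw P π s₀ R k = (polMatrix P π ^ k *ᵥ fun s => π s ⬝ᵥ R s) s₀ := by
  simp only [expRw, stepDist_eq_pow_apply_mul, Fintype.sum_prod_type, mulVec, dotProduct, mul_sum]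
  exact sum_congr rfl fun s _ => sum_congr rfl fun a _ => by ring

variable (hP : IsKernel P) {h : S → ℝ} {v : ℝ}
include hP

theorem avgSeq_le_of_le {π : S → A → ℝ} (hπ : IsPolicy π)
    (hle : (fun s => π s ⬝ᵥ R s) + polMatrix P π *ᵥ h ≤ h + v • 1) (s₀ : S) {T : ℕ} (hT : 0 < T) :
    avgSeq P π s₀ R T ≤ v + 2 * ‖h‖ / T := by
  have hT' : (0 : ℝ) < T := Nat.cast_pos.2 hT
  rw [avgSeq, div_le_iff₀ hT', add_mul, div_mul_cancel₀ _ hT'.ne', mul_comm v]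
  simpa only [expRw_eq_pow_mulVec_apply] using
    sum_pow_mulVec_apply_le (hπ.polMatrix_mem_rowStochastic hP) hle T s₀

theorem le_avgSeq_of_le {π : S → A → ℝ} (hπ : IsPolicy π)
    (hle : h + v • 1 ≤ (fun s => π s ⬝ᵥ R s) + polMatrix P π *ᵥ h) (s₀ : S) {T : ℕ} (hT : 0 < T) :
    v - 2 * ‖h‖ / T ≤ avgSeq P π s₀ R T := by
  have hT' : (0 : ℝ) < T := Nat.cast_pos.2 hT
  rw [avgSeq, le_div_iff₀ hT', sub_mul, div_mul_cancel₀ _ hT'.ne', mul_comm v]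
  simpa only [expRw_eq_pow_mulVec_apply] using
    le_sum_pow_mulVec_apply (hπ.polMatrix_mem_rowStochastic hP) hle T s₀

theorem optAvg_eq_of_forall_add_eq_ciSup [Nonempty A]
    (hbell : ∀ s, h s + v = ⨆ a, R s a + P s a ⬝ᵥ h) (s₀ : S) : optAvg P s₀ R = v := by
  classical
  have hpolicy : ∀ π, IsPolicy π → (fun s => π s ⬝ᵥ R s) + polMatrix P π *ᵥ h ≤ h + v • 1 := by
    intro π hπ s
    simp only [Pi.add_apply, polMatrix_mulVec_apply, ← dotProduct_add, Pi.smul_apply,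
      Pi.one_apply, smul_eq_mul, mul_one]
    calc π s ⬝ᵥ (R s + fun a => P s a ⬝ᵥ h) ≤ π s ⬝ᵥ (h s + v) • (1 : A → ℝ) :=
          dotProduct_le_dotProduct_of_nonneg_left (fun a => by
            simpa [hbell s] using
              le_ciSup (Finite.bddAbove_range fun a => R s a + P s a ⬝ᵥ h) a) (hπ.1 s)
      _ = h s + v := by rw [dotProduct_smul, dotProduct_one, hπ.2 s, smul_eq_mul, mul_one]
  choose g hg using fun s => exists_eq_ciSup_of_finite (f := fun a : A => R s a + P s a ⬝ᵥ h)
  have hgreedy : h + v • 1 ≤ (fun s => detPol g s ⬝ᵥ R s) + polMatrix P (detPol g) *ᵥ h :=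
    fun s => by simp [polMatrix_mulVec_apply, detPol_dotProduct, hbell s, hg s]
  have herr : Tendsto (fun T : ℕ => 2 * ‖h‖ / T) atTop (𝓝 0) :=
    tendsto_const_div_atTop_nhds_zero_nat _
  refine IsGreatest.csSup_eq ⟨⟨detPol g, isPolicy_detPol g, ?_⟩, ?_⟩
  · refine tendsto_of_tendsto_of_tendsto_of_le_of_le' (by simpa using tendsto_const_nhds.sub herr)
      (by simpa using tendsto_const_nhds.add herr) ?_ ?_ <;>
      refine eventually_atTop.2 ⟨1, fun T hT => ?_⟩
    · exact le_avgSeq_of_le hP (isPolicy_detPol g) hgreedy s₀ hT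
    · exact avgSeq_le_of_le hP (isPolicy_detPol g) (hpolicy _ (isPolicy_detPol g)) s₀ hT
  · rintro w ⟨π, hπ, hw⟩
    exact le_of_tendsto_of_tendsto hw (by simpa using tendsto_const_nhds.add herr)
      (eventually_atTop.2 ⟨1, fun T hT => avgSeq_le_of_le hP hπ (hpolicy π hπ) s₀ hT⟩)

end AverageReward

theorem stmt2_general {S A : Type*} [Fintype S] [Fintype A]
    [DecidableEq S] [Nonempty A]
    (P : S → A → S → ℝ) (hP : IsKernel P) (R : S → A → ℝ)
    (sstar : S) (hrec : RecurrentForAll P sstar) :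
    ∃ (v : ℝ) (h : S → ℝ),
      (∀ s : S, h s + v
          = ⨆ a : A, (R s a + ∑ s' : S, P s a s' * h s')) ∧
      ∀ s₀ : S, v = optAvg P s₀ R := by
  obtain ⟨v, h, hvh⟩ := exists_bellmanOp_one_eq_add_smul_one hP hrec R
  have hbell : ∀ s, h s + v = ⨆ a, R s a + P s a ⬝ᵥ h := fun s => by
    simpa [bellmanOp] using (congrFun hvh s).symm
  exact ⟨v, h, hbell, fun s₀ => (optAvg_eq_of_forall_add_eq_ciSup hP hbell s₀).symm⟩

/-- For a finite MDP with bounded reward admitting a state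
`s*` recurrent under every stationary policy, there are `v ∈ ℝ` and
`h : S → ℝ` solving the average-reward Bellman equation
`h(s) + v = max_a (R(s,a) + Σ_{s'} P(s,a,s') h(s'))`, and `v` equals the
optimal expected average reward from every initial state. -/
theorem stmt2 {S A : Type*} [Fintype S] [Fintype A]
    [DecidableEq S] [DecidableEq A] [Nonempty S] [Nonempty A]
    (P : S → A → S → ℝ) (hP : IsKernel P) (R : S → A → ℝ)
    (sstar : S) (hrec : RecurrentForAll P sstar) :
    ∃ (v : ℝ) (h : S → ℝ),
      (∀ s : S, h s + v
          = ⨆ a : A, (R s a + ∑ s' : S, P s a s' * h s')) ∧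
      ∀ s₀ : S, v = optAvg P s₀ R :=
  stmt2_general P hP R sstar hrec
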